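/- In a quadrilateral with diameter 1 inscribed in a rectangle of length 1 and width W, where the diameter aligns with the horizontal direction, there exists an isosceles triangle with base the diameter segment whose two equal sides have length at least 1/√(4 − W²). -/

import Mathlib

/-!
The apex is the point `v` where the perpendicular bisector `x = 1/2` of `ac` meets the segment
joining `b = (x, W₁)` to whichever of `a`, `c` is horizontally farther from it, at horizontal
distance `m ≥ 1/2`. Then `v = (1/2, W₁/(2m))`, and `m² + W₁² ≤ 1` because that side has length
at most `1`, so `|av|² ≥ 1/4 + W₁²/(4(1 - W₁²)) = 1/(4(1 - W₁²)) ≥ 1/(4 - W²)` since `W₁ ≥ W/2`.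
-/

open AffineMap

lemma EuclideanSpace.dist_fin_two (p q : EuclideanSpace ℝ (Fin 2)) :
    dist p q = √((p 0 - q 0) ^ 2 + (p 1 - q 1) ^ 2) := by
  rw [EuclideanSpace.dist_eq, Fin.sum_univ_two, Real.dist_eq, Real.dist_eq, sq_abs, sq_abs]

lemma EuclideanSpace.lineMap_apply_coord {ι : Type*} (p q : EuclideanSpace ℝ ι) (t : ℝ) (i : ι) :
    lineMap p q t i = p i + t * (q i - p i) := by
  simp only [lineMap_apply_module', PiLp.add_apply, PiLp.smul_apply, PiLp.sub_apply, smul_eq_mul]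
  ring

lemma one_div_sqrt_four_sub_sq_le {W h m : ℝ} (hW : 0 ≤ W) (hWh : W ≤ 2 * h) (hm : 0 < m)
    (hmh : m ^ 2 + h ^ 2 ≤ 1) : 1 / √(4 - W ^ 2) ≤ √(1 / 4 + (h / (2 * m)) ^ 2) := by
  have hh : 0 < 1 - h ^ 2 := by nlinarith
  have hWsq : W ^ 2 ≤ 4 * h ^ 2 := by nlinarith
  rw [one_div, ← Real.sqrt_inv]
  refine Real.sqrt_le_sqrt ?_
  calc (4 - W ^ 2)⁻¹ ≤ (4 * (1 - h ^ 2))⁻¹ := by gcongr; linarith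
    _ = 1 / 4 + h ^ 2 / (4 * (1 - h ^ 2)) := by field_simp; ring
    _ ≤ 1 / 4 + h ^ 2 / (4 * m ^ 2) := by gcongr; linarith
    _ = 1 / 4 + (h / (2 * m)) ^ 2 := by ring

open EuclideanSpace in
lemma exists_mem_segment_bisector {a b c : EuclideanSpace ℝ (Fin 2)}
    (ha0 : a 0 = 0) (ha1 : a 1 = 0) (hc0 : c 0 = 1) (hc1 : c 1 = 0)
    (hab : dist a b ≤ 1) (hcb : dist c b ≤ 1) :
    ∃ v ∈ segment ℝ a b ∪ segment ℝ c b, v 0 = 1 / 2 ∧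
      ∃ m, 0 < m ∧ m ^ 2 + b 1 ^ 2 ≤ 1 ∧ v 1 = b 1 / (2 * m) := by
  rw [dist_fin_two, Real.sqrt_le_one, ha0, ha1] at hab
  rw [dist_fin_two, Real.sqrt_le_one, hc0, hc1] at hcb
  rcases le_or_gt (1 / 2) (b 0) with hx | hx
  · have hs : 1 / (2 * b 0) ∈ Set.Icc (0 : ℝ) 1 :=
      ⟨by positivity, by rw [div_le_one (by linarith)]; linarith⟩
    refine ⟨lineMap a b (1 / (2 * b 0)), .inl (lineMap_mem_segment ℝ _ _ hs), ?_,
      b 0, by linarith, by linarith, ?_⟩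
    · rw [lineMap_apply_coord, ha0]; field_simp; ring
    · rw [lineMap_apply_coord, ha1]; field_simp; ring
  · have hm : 0 < 1 - b 0 := by linarith
    have hs : 1 / (2 * (1 - b 0)) ∈ Set.Icc (0 : ℝ) 1 :=
      ⟨by positivity, by rw [div_le_one (by positivity)]; linarith⟩
    refine ⟨lineMap c b (1 / (2 * (1 - b 0))), .inr (lineMap_mem_segment ℝ _ _ hs), ?_,
      1 - b 0, hm, by linarith, ?_⟩
    · rw [lineMap_apply_coord, hc0]; field_simp; ring
    · rw [lineMap_apply_coord, hc1]; field_simp; ring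

theorem stmt13_general (W W₁ : ℝ) (hW : 0 < W)
    (hmid : W / 2 ≤ W₁)
    (a b c d : EuclideanSpace ℝ (Fin 2))
    (ha0 : a 0 = 0) (ha1 : a 1 = 0) (hc0 : c 0 = 1) (hc1 : c 1 = 0)
    (hb1 : b 1 = W₁)
    (hdiam : ∀ p ∈ ({a, b, c, d} : Set (EuclideanSpace ℝ (Fin 2))),
      ∀ r ∈ ({a, b, c, d} : Set (EuclideanSpace ℝ (Fin 2))), dist p r ≤ 1) :
    ∃ v ∈ convexHull ℝ ({a, b, c, d} : Set (EuclideanSpace ℝ (Fin 2))),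
      dist a v = dist c v ∧ 1 / Real.sqrt (4 - W ^ 2) ≤ dist a v := by
  obtain ⟨v, hv, hv0, m, hm, hmb, hv1⟩ := exists_mem_segment_bisector ha0 ha1 hc0 hc1
    (hdiam a (by simp) b (by simp)) (hdiam c (by simp) b (by simp))
  have hav : dist a v = √(1 / 4 + v 1 ^ 2) := by rw [EuclideanSpace.dist_fin_two, ha0, ha1, hv0]; norm_num
  have hcv : dist c v = √(1 / 4 + v 1 ^ 2) := by rw [EuclideanSpace.dist_fin_two, hc0, hc1, hv0]; norm_num
  refine ⟨v, ?_, hav.trans hcv.symm, ?_⟩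
  · rcases hv with hv | hv
    exacts [segment_subset_convexHull (by simp) (by simp) hv,
      segment_subset_convexHull (by simp) (by simp) hv]
  · rw [hav, hv1, hb1]
    exact one_div_sqrt_four_sub_sq_le hW.le (by linarith) hm (hb1 ▸ hmb)

/-- A convex quadrilateral `abcd` of diameter `1`, inscribed in a `1 × W` rectangle
with its diameter `ac` horizontal (`a = (0,0)`, `c = (1,0)`, `b` at height `W₁ ≥ W/2`
on the top side, `d` at depth `W₂` on the bottom side, `W₁ + W₂ = W`),
contains an isosceles triangle with base `ac` whose two equal sides have
length at least `1/√(4 − W²)`. -/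
theorem stmt13 (W W₁ W₂ : ℝ) (hW : 0 < W) (hW1 : W ≤ 1)
    (hsum : W₁ + W₂ = W) (hmid : W / 2 ≤ W₁) (hW₂ : 0 ≤ W₂)
    (a b c d : EuclideanSpace ℝ (Fin 2))
    (ha0 : a 0 = 0) (ha1 : a 1 = 0) (hc0 : c 0 = 1) (hc1 : c 1 = 0)
    (hb1 : b 1 = W₁) (hd1 : d 1 = -W₂)
    (hb0 : b 0 ∈ Set.Icc (0 : ℝ) 1) (hd0 : d 0 ∈ Set.Icc (0 : ℝ) 1)
    (hdiam : ∀ p ∈ ({a, b, c, d} : Set (EuclideanSpace ℝ (Fin 2))),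
      ∀ r ∈ ({a, b, c, d} : Set (EuclideanSpace ℝ (Fin 2))), dist p r ≤ 1) :
    ∃ v ∈ convexHull ℝ ({a, b, c, d} : Set (EuclideanSpace ℝ (Fin 2))),
      dist a v = dist c v ∧ 1 / Real.sqrt (4 - W ^ 2) ≤ dist a v :=
  stmt13_general W W₁ hW hmid a b c d ha0 ha1 hc0 hc1 hb1 hdiam
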